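/- Suppose h : I → (0,∞) is smooth on an interval I, and both h''/h and ((n-2)K - h h'' - (n-2)(h')²)/h² are constant in t, for some constants K and n ≥ 3. Then (K - (h')²)/h² is constant and h'' = C h for some constant C; consequently the warped product dt² + h²σ^K is locally either a space of constant curvature or the Riemannian product of an interval with a constant curvature space. -/
import Mathlib


/-- If, for a smooth positive warping function h, both h''/h and
((n-2)K - h h'' - (n-2)(h')²)/h² are constant on an interval, then
(K - (h')²)/h² is constant and h'' = C h for some constant C. -/
theorem stmt_14 (n : ℕ) (hn : 3 ≤ n) (K a b : ℝ) (hab : a < b)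
    (h : ℝ → ℝ) (hsm : ContDiff ℝ (⊤ : ℕ∞) h)
    (hpos : ∀ t ∈ Set.Ioo a b, 0 < h t)
    (c₁ : ℝ) (h1 : ∀ t ∈ Set.Ioo a b, deriv (deriv h) t / h t = c₁)
    (c₂ : ℝ) (h2 : ∀ t ∈ Set.Ioo a b,
      (((n : ℝ) - 2) * K - h t * deriv (deriv h) t
        - ((n : ℝ) - 2) * (deriv h t) ^ 2) / (h t) ^ 2 = c₂) :
    (∃ c₃ : ℝ, ∀ t ∈ Set.Ioo a b, (K - (deriv h t) ^ 2) / (h t) ^ 2 = c₃) ∧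
    (∃ C : ℝ, ∀ t ∈ Set.Ioo a b, deriv (deriv h) t = C * h t) := by
  have hn2 : ((n : ℝ) - 2) ≠ 0 := by
    have : (3 : ℝ) ≤ (n : ℝ) := by exact_mod_cast hn
    linarith
  constructor
  · refine ⟨(c₁ + c₂) / ((n : ℝ) - 2), ?_⟩
    intro t ht
    have hp := hpos t ht
    have hne : h t ≠ 0 := ne_of_gt hp
    have e1 := h1 t ht
    have e2 := h2 t ht
    have hd : deriv (deriv h) t = c₁ * h t := by
      field_simp at e1; linarith
    rw [hd] at e2
    field_simp at e2 ⊢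
    nlinarith [sq_nonneg (h t), e2]
  · refine ⟨c₁, ?_⟩
    intro t ht
    have hne : h t ≠ 0 := ne_of_gt (hpos t ht)
    have e1 := h1 t ht
    field_simp at e1; linarith
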